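/- For each k ∈ {2, …, M+2}, among all subsets of N∖M that are self-decodable at node π(k) there is a unique largest one: there exists a subset D_k ⊆ N∖M that is self-decodable at node π(k) and contains every subset of N∖M that is self-decodable at node π(k). (The empty set is vacuously self-decodable, so D_k exists and is well-defined.) -/

import Mathlib

open scoped BigOperators

set_option synthInstance.maxHeartbeats 1000000
set_option synthInstance.maxSize 1024
set_option maxHeartbeats 1000000

/-- Shannon entropy (natural log) of a random variable `X` on a finite sample
space `Ω` with probability mass function `μ`. -/
noncomputable def entropy {Ω α : Type*} [Fintype Ω] [Fintype α] [DecidableEq α]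
    (μ : Ω → ℝ) (X : Ω → α) : ℝ :=
  ∑ a : α, Real.negMulLog (∑ ω ∈ Finset.univ.filter (fun ω => X ω = a), μ ω)

/-- Conditional mutual information `I(X;Y|Z)` for random variables on a finite
sample space with pmf `μ`. -/
noncomputable def condMI {Ω α β γ : Type*} [Fintype Ω]
    [Fintype α] [DecidableEq α] [Fintype β] [DecidableEq β] [Fintype γ] [DecidableEq γ]
    (μ : Ω → ℝ) (X : Ω → α) (Y : Ω → β) (Z : Ω → γ) : ℝ :=
  entropy μ (fun ω => (X ω, Z ω)) + entropy μ (fun ω => (Y ω, Z ω))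
    - entropy μ (fun ω => (X ω, Y ω, Z ω)) - entropy μ Z

/-- Sample space for the unified D-F/C-F multiple-relay framework: a value of
`(q, x₀, (xᵢ)ᵢ, (yᵢ)ᵢ, y_{n+1}, (ŷᵢ)ᵢ)`. -/
abbrev DFOmega {n : ℕ} (QA X0A : Type) (XA YA : Fin n → Type) (YdA : Type)
    (YhA : Fin n → Type) : Type :=
  QA × X0A × (∀ i, XA i) × (∀ i, YA i) × YdA × (∀ i, YhA i)

section DF

variable {n Mc : ℕ} {QA X0A YdA : Type} {XA YA YhA : Fin n → Type}

/-- The time-sharing variable `Q`. -/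
def rvQ : DFOmega QA X0A XA YA YdA YhA → QA := fun ω => ω.1

/-- The source input `X₀`. -/
def rvX0 : DFOmega QA X0A XA YA YdA YhA → X0A := fun ω => ω.2.1

/-- The tuple of relay inputs `X_S = (Xᵢ)_{i∈S}`. -/
def rvXS (S : Finset (Fin n)) : DFOmega QA X0A XA YA YdA YhA → (∀ i : S, XA i) :=
  fun ω i => ω.2.2.1 i

/-- The tuple of relay outputs `Y_S = (Yᵢ)_{i∈S}`. -/
def rvYS (S : Finset (Fin n)) : DFOmega QA X0A XA YA YdA YhA → (∀ i : S, YA i) :=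
  fun ω i => ω.2.2.2.1 i

/-- The destination output `Y_{n+1}`. -/
def rvYd : DFOmega QA X0A XA YA YdA YhA → YdA := fun ω => ω.2.2.2.2.1

/-- The tuple of compressions `Ŷ_S = (Ŷᵢ)_{i∈S}`. -/
def rvYhS (S : Finset (Fin n)) : DFOmega QA X0A XA YA YdA YhA → (∀ i : S, YhA i) :=
  fun ω i => ω.2.2.2.2.2 i

/-- The joint pmf
`p(q)·p(x₀|q)·p(x_M|x₀,q)·∏_{i∈N∖M} p(xᵢ|q) · p(y₁,…,y_{n+1}|x₀,…,x_n) ·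
∏ p(ŷᵢ|yᵢ,xᵢ,q)`. -/
noncomputable def muDF (ℳ : Finset (Fin n)) (pQ : QA → ℝ) (p0 : QA → X0A → ℝ)
    (pM : QA → X0A → (∀ i : ℳ, XA i) → ℝ) (pC : ∀ i : Fin n, QA → XA i → ℝ)
    (W : X0A → (∀ i, XA i) → ((∀ i, YA i) × YdA) → ℝ)
    (κ : ∀ i : Fin n, QA → YA i → XA i → YhA i → ℝ) :
    DFOmega QA X0A XA YA YdA YhA → ℝ :=
  fun ω => pQ ω.1 * p0 ω.1 ω.2.1 * pM ω.1 ω.2.1 (fun i => ω.2.2.1 i)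
    * (∏ i ∈ ℳᶜ, pC i ω.1 (ω.2.2.1 i))
    * W ω.2.1 ω.2.2.1 (ω.2.2.2.1, ω.2.2.2.2.1)
    * ∏ i, κ i ω.1 (ω.2.2.2.1 i) (ω.2.2.1 i) (ω.2.2.2.2.2 i)

/-- The set of relays upstream of node `π(k)` in the D-F route, i.e. the relays
`π(2:k-1)` of the paper: with `σ` enumerating the D-F relays in route order and
`k : Fin (Mc+1)` standing for the paper's index `k+2 ∈ {2,…,M+2}`, this is
`{σ j : j < k}`. -/
def upSet (σ : Fin Mc → Fin n) (k : Fin (Mc + 1)) : Finset (Fin n) :=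
  (Finset.univ.filter (fun j : Fin Mc => (j : ℕ) < (k : ℕ))).image σ

/-- The set of relays `π(k:M+1)` of the paper, namely the D-F relays downstream
of (and including) node `π(k)`: `{σ j : k ≤ j}`. -/
def downSet (σ : Fin Mc → Fin n) (k : Fin (Mc + 1)) : Finset (Fin n) :=
  (Finset.univ.filter (fun j : Fin Mc => (k : ℕ) ≤ (j : ℕ))).image σ

/-- The alphabet of the channel output `Y_{π(k)}` observed at node `π(k)`: a relay
output for `k < Mc`, and the destination output for `k = Mc` (paper `k = M+2`). -/
def YkType (σ : Fin Mc → Fin n) (YA : Fin n → Type) (YdA : Type)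
    (k : Fin (Mc + 1)) : Type :=
  if h : (k : ℕ) < Mc then YA (σ ⟨(k : ℕ), h⟩) else YdA

instance YkType.instFintype (σ : Fin Mc → Fin n) [∀ i, Fintype (YA i)] [Fintype YdA]
    (k : Fin (Mc + 1)) : Fintype (YkType σ YA YdA k) := by
  unfold YkType; split <;> infer_instance

instance YkType.instDecidableEq (σ : Fin Mc → Fin n) [∀ i, DecidableEq (YA i)]
    [DecidableEq YdA] (k : Fin (Mc + 1)) : DecidableEq (YkType σ YA YdA k) := by
  unfold YkType; split <;> infer_instance

/-- The channel output `Y_{π(k)}` observed at node `π(k)`. -/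
def rvYk (σ : Fin Mc → Fin n) (k : Fin (Mc + 1))
    (ω : DFOmega QA X0A XA YA YdA YhA) : YkType σ YA YdA k :=
  if h : (k : ℕ) < Mc then
    cast (by simp [YkType, h]) (ω.2.2.2.1 (σ ⟨(k : ℕ), h⟩))
  else
    cast (by simp [YkType, h]) ω.2.2.2.2.1

variable [Fintype QA] [DecidableEq QA] [Fintype X0A] [DecidableEq X0A]
  [Fintype YdA] [DecidableEq YdA]
  [∀ i, Fintype (XA i)] [∀ i, DecidableEq (XA i)]
  [∀ i, Fintype (YA i)] [∀ i, DecidableEq (YA i)]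
  [∀ i, Fintype (YhA i)] [∀ i, DecidableEq (YhA i)]

/-- `F_k(T) = min_{S ⊆ T} [ I(X_{π(1:k-1)}, X_S; Ŷ_{T∖S}, Y_{π(k)} | X_{T∖S}, X_{π(k:M+1)}, Q)`
`− I(Y_S; Ŷ_S | X_{π(1:M+1)}, X_T, Y_{π(k)}, Ŷ_{T∖S}, Q) ]`, where `π(1:k-1)`
consists of the source `0` together with `upSet σ k`, `π(k:M+1) = downSet σ k`,
and `π(1:M+1)` consists of the source together with all D-F relays `ℳ`. -/
noncomputable def Fk (ℳ : Finset (Fin n)) (σ : Fin Mc → Fin n)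
    (μ : DFOmega QA X0A XA YA YdA YhA → ℝ) (k : Fin (Mc + 1))
    (T : Finset (Fin n)) : ℝ :=
  T.powerset.inf' (Finset.powerset_nonempty T) fun S =>
    condMI μ (fun ω => ((rvX0 ω, rvXS (upSet σ k) ω), rvXS S ω))
      (fun ω => (rvYhS (T \ S) ω, rvYk σ k ω))
      (fun ω => (rvXS (T \ S) ω, rvXS (downSet σ k) ω, rvQ ω))
    - condMI μ (rvYS S) (rvYhS S)
      (fun ω => ((rvX0 ω, rvXS ℳ ω), rvXS T ω, rvYk σ k ω, rvYhS (T \ S) ω, rvQ ω))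

/-- `D ⊆ N∖M` is self-decodable at node `π(k)` if for every nonempty `S ⊆ D`,
`I(X_S; Ŷ_{D∖S}, Y_{π(k)} | X_{π(1:M+1)}, X_{D∖S}, Q)`
`− I(Y_S; Ŷ_S | X_{π(1:M+1)}, X_D, Y_{π(k)}, Ŷ_{D∖S}, Q) > 0`. -/
def SelfDecodable (ℳ : Finset (Fin n)) (σ : Fin Mc → Fin n)
    (μ : DFOmega QA X0A XA YA YdA YhA → ℝ) (k : Fin (Mc + 1))
    (D : Finset (Fin n)) : Prop :=
  ∀ S ⊆ D, S.Nonempty →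
    0 < condMI μ (rvXS S) (fun ω => (rvYhS (D \ S) ω, rvYk σ k ω))
          (fun ω => ((rvX0 ω, rvXS ℳ ω), rvXS (D \ S) ω, rvQ ω))
      - condMI μ (rvYS S) (rvYhS S)
          (fun ω => ((rvX0 ω, rvXS ℳ ω), rvXS D ω, rvYk σ k ω, rvYhS (D \ S) ω, rvQ ω))

end DF

/-!
Write `G_D(S)` for the quantity whose positivity defines self-decodability. The relay inputs
off `ℳ` are independent given `Q`, and each `Ŷᵢ` is drawn from its own kernel given
`(Yᵢ, Xᵢ, Q)`, so the chain rule turns `G_D(S)` into a difference `Φ(D) - Φ(D \ S)` with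
`Φ(T) = ∑_{i ∈ T} (H(Xᵢ | Q) + H(Ŷᵢ | Yᵢ, Xᵢ, Q)) - H(X₀, X_{T ∪ ℳ}, Ŷ_T, Y_{π(k)}, Q)`.
Hence `D` is self-decodable iff `Φ(T) < Φ(D)` for every proper subset `T` of `D`. The joint
entropy is submodular in `T` (conditional mutual information is nonnegative), so `Φ` is
supermodular, and for a supermodular function the sets that strictly beat all their proper
subsets are closed under union. The union of all self-decodable sets is therefore the largest one.
-/

open Finset Real

section FiniteEntropy

variable {Ω α β γ : Type*} [Fintype Ω] [DecidableEq α] [DecidableEq β] [DecidableEq γ]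
  {μ : Ω → ℝ}

noncomputable def pmfOf (μ : Ω → ℝ) (X : Ω → α) (a : α) : ℝ :=
  ∑ ω ∈ univ.filter (fun ω => X ω = a), μ ω

lemma entropy_eq_sum_negMulLog_pmfOf [Fintype α] (μ : Ω → ℝ) (X : Ω → α) :
    entropy μ X = ∑ a, negMulLog (pmfOf μ X a) := rfl

lemma pmfOf_nonneg (hμ : ∀ ω, 0 ≤ μ ω) (X : Ω → α) (a : α) : 0 ≤ pmfOf μ X a :=
  sum_nonneg fun _ _ => hμ _

lemma le_pmfOf_self (hμ : ∀ ω, 0 ≤ μ ω) (X : Ω → α) (ω : Ω) : μ ω ≤ pmfOf μ X (X ω) :=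
  single_le_sum (f := μ) (fun _ _ => hμ _) (mem_filter.mpr ⟨mem_univ ω, rfl⟩)

lemma pmfOf_congr {X : Ω → α} {Y : Ω → β} {a : α} {b : β} (h : ∀ ω, X ω = a ↔ Y ω = b) :
    pmfOf μ X a = pmfOf μ Y b := by
  rw [pmfOf, pmfOf, filter_congr fun ω _ => h ω]

lemma sum_pmfOf_mul [Fintype α] (μ : Ω → ℝ) (X : Ω → α) (f : α → ℝ) :
    ∑ a, pmfOf μ X a * f a = ∑ ω, μ ω * f (X ω) := by
  rw [← sum_fiberwise univ X fun ω => μ ω * f (X ω)]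
  refine sum_congr rfl fun a _ => ?_
  rw [pmfOf, sum_mul]
  exact sum_congr rfl fun ω hω => by rw [(mem_filter.mp hω).2]

lemma sum_pmfOf [Fintype α] (μ : Ω → ℝ) (X : Ω → α) : ∑ a, pmfOf μ X a = ∑ ω, μ ω := by
  simpa using sum_pmfOf_mul μ X 1

lemma sum_pmfOf_pair_left [Fintype α] (μ : Ω → ℝ) (X : Ω → α) (Z : Ω → γ) (c : γ) :
    ∑ a, pmfOf μ (fun ω => (X ω, Z ω)) (a, c) = pmfOf μ Z c := by
  simp only [pmfOf, Prod.mk.injEq]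
  rw [← sum_fiberwise (univ.filter fun ω => Z ω = c) X μ]
  simp only [filter_filter, and_comm]

lemma entropy_eq_neg_sum_mul_log [Fintype α] (μ : Ω → ℝ) (X : Ω → α) :
    entropy μ X = -∑ ω, μ ω * log (pmfOf μ X (X ω)) := by
  rw [entropy_eq_sum_negMulLog_pmfOf, ← sum_pmfOf_mul μ X fun a => log (pmfOf μ X a),
    ← sum_neg_distrib]
  simp only [negMulLog, neg_mul]

lemma entropy_congr [Fintype α] [Fintype β] {X : Ω → α} {Y : Ω → β}
    (h : ∀ ω ω', X ω = X ω' ↔ Y ω = Y ω') : entropy μ X = entropy μ Y := by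
  have hpmf : ∀ ω, pmfOf μ X (X ω) = pmfOf μ Y (Y ω) := fun ω =>
    pmfOf_congr fun ω' => by rw [h ω' ω]
  simp only [entropy_eq_neg_sum_mul_log, hpmf]

lemma sum_mul_pmfOf_ratio_le [Fintype α] [Fintype β] [Fintype γ] (hμ : ∀ ω, 0 ≤ μ ω)
    (X : Ω → α) (Y : Ω → β) (Z : Ω → γ) :
    ∑ ω, μ ω * (pmfOf μ (fun ω => (X ω, Z ω)) (X ω, Z ω)
        * pmfOf μ (fun ω => (Y ω, Z ω)) (Y ω, Z ω)
        / (pmfOf μ (fun ω => (X ω, Y ω, Z ω)) (X ω, Y ω, Z ω) * pmfOf μ Z (Z ω)))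
      ≤ ∑ ω, μ ω := by
  set pXZ := pmfOf μ fun ω => (X ω, Z ω)
  set pYZ := pmfOf μ fun ω => (Y ω, Z ω)
  set pXYZ := pmfOf μ fun ω => (X ω, Y ω, Z ω)
  set pZ := pmfOf μ Z
  have hX : ∀ c, ∑ a, pXZ (a, c) = pZ c := sum_pmfOf_pair_left μ X Z
  have hY : ∀ c, ∑ b, pYZ (b, c) = pZ c := sum_pmfOf_pair_left μ Y Z
  have hmarg : ∑ v : α × β × γ, pXZ (v.1, v.2.2) * pYZ (v.2.1, v.2.2) / pZ v.2.2
      = ∑ c, pZ c * pZ c / pZ c :=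
    calc _ = ∑ a, ∑ b, ∑ c, pXZ (a, c) * pYZ (b, c) / pZ c := by
          simp only [Fintype.sum_prod_type]
      _ = ∑ c, ∑ a, ∑ b, pXZ (a, c) * pYZ (b, c) / pZ c :=
          (sum_congr rfl fun _ _ => sum_comm).trans sum_comm
      _ = ∑ c, (∑ a, pXZ (a, c)) * (∑ b, pYZ (b, c)) / pZ c := by
          simp only [sum_mul, mul_sum, sum_div]
          exact sum_congr rfl fun _ _ => sum_comm
      _ = _ := by simp only [hX, hY]
  calc _ = ∑ v, pXYZ v * (pXZ (v.1, v.2.2) * pYZ (v.2.1, v.2.2) / (pXYZ v * pZ v.2.2)) :=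
        (sum_pmfOf_mul μ (fun ω => (X ω, Y ω, Z ω)) fun v =>
          pXZ (v.1, v.2.2) * pYZ (v.2.1, v.2.2) / (pXYZ v * pZ v.2.2)).symm
    _ ≤ ∑ v : α × β × γ, pXZ (v.1, v.2.2) * pYZ (v.2.1, v.2.2) / pZ v.2.2 := by
        refine sum_le_sum fun v _ => ?_
        rcases eq_or_ne (pXYZ v) 0 with h | h
        · rw [h, zero_mul]
          exact div_nonneg (mul_nonneg (pmfOf_nonneg hμ _ _) (pmfOf_nonneg hμ _ _))
            (pmfOf_nonneg hμ _ _)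
        · rw [← mul_div_assoc, mul_div_mul_left _ _ h]
    _ = ∑ c, pZ c := by rw [hmarg]; simp only [mul_self_div_self]
    _ = ∑ ω, μ ω := sum_pmfOf μ Z

lemma condMI_nonneg [Fintype α] [Fintype β] [Fintype γ] (hμ : ∀ ω, 0 ≤ μ ω)
    (X : Ω → α) (Y : Ω → β) (Z : Ω → γ) : 0 ≤ condMI μ X Y Z := by
  set pXZ := fun ω => pmfOf μ (fun ω => (X ω, Z ω)) (X ω, Z ω)
  set pYZ := fun ω => pmfOf μ (fun ω => (Y ω, Z ω)) (Y ω, Z ω)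
  set pXYZ := fun ω => pmfOf μ (fun ω => (X ω, Y ω, Z ω)) (X ω, Y ω, Z ω)
  set pZ := fun ω => pmfOf μ Z (Z ω)
  have hcondMI : condMI μ X Y Z
      = ∑ ω, μ ω * (log (pXYZ ω) + log (pZ ω) - log (pXZ ω) - log (pYZ ω)) := by
    simp only [condMI, entropy_eq_neg_sum_mul_log, mul_add, mul_sub, sum_add_distrib,
      sum_sub_distrib]
    ring
  -- Gibbs' inequality, pointwise: `1 - x⁻¹ ≤ log x`.
  have hgibbs : ∀ ω, μ ω - μ ω * (pXZ ω * pYZ ω / (pXYZ ω * pZ ω))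
      ≤ μ ω * (log (pXYZ ω) + log (pZ ω) - log (pXZ ω) - log (pYZ ω)) := by
    intro ω
    rcases (hμ ω).eq_or_lt with h | h
    · simp [← h]
    have h1 := h.trans_le (le_pmfOf_self hμ (fun ω => (X ω, Y ω, Z ω)) ω)
    have h2 := h.trans_le (le_pmfOf_self hμ Z ω)
    have h3 := h.trans_le (le_pmfOf_self hμ (fun ω => (X ω, Z ω)) ω)
    have h4 := h.trans_le (le_pmfOf_self hμ (fun ω => (Y ω, Z ω)) ω)
    have key := one_sub_inv_le_log_of_pos (by positivity : 0 < pXYZ ω * pZ ω / (pXZ ω * pYZ ω))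
    rw [inv_div, log_div (by positivity) (by positivity), log_mul h1.ne' h2.ne',
      log_mul h3.ne' h4.ne'] at key
    linarith [mul_le_mul_of_nonneg_left key h.le]
  have hratio := sum_mul_pmfOf_ratio_le hμ X Y Z
  rw [hcondMI]
  linarith [sum_le_sum fun ω (_ : ω ∈ univ) => hgibbs ω, sum_sub_distrib (s := univ) (f := μ)
    (g := fun ω => μ ω * (pXZ ω * pYZ ω / (pXYZ ω * pZ ω)))]

lemma pmfOf_pair_eq_kernel_mul [Fintype α] {ι : Type*} (ν : Ω → ℝ) (U : Ω → α) (W : Ω → γ)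
    (κ : ι → α → ℝ) (g : γ → ι) (upd : Ω → α → Ω)
    (hU_upd : ∀ ω a, U (upd ω a) = a) (hupd_U : ∀ ω, upd ω (U ω) = ω)
    (hupd_upd : ∀ ω a a', upd (upd ω a) a' = upd ω a')
    (hW_upd : ∀ ω a, W (upd ω a) = W ω) (hν_upd : ∀ ω a, ν (upd ω a) = ν ω)
    (hμ : ∀ ω, μ ω = ν ω * κ (g (W ω)) (U ω)) (hκ : ∀ i, ∑ a, κ i a = 1) (a : α) (w : γ) :
    pmfOf μ (fun ω => (U ω, W ω)) (a, w) = κ (g w) a * pmfOf μ W w := by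
  set fiber : α → Finset Ω := fun a' => univ.filter fun ω => U ω = a' ∧ W ω = w
  have hpair : ∀ a', pmfOf μ (fun ω => (U ω, W ω)) (a', w)
      = κ (g w) a' * ∑ ω ∈ fiber a', ν ω := by
    intro a'
    simp only [pmfOf, Prod.mk.injEq, mul_sum]
    refine sum_congr rfl fun ω hω => ?_
    obtain ⟨hU, hW⟩ := (mem_filter.mp hω).2
    rw [hμ, hU, hW, mul_comm]
  have hfiber : ∀ a', ∑ ω ∈ fiber a', ν ω = ∑ ω ∈ fiber a, ν ω := by
    intro a'
    refine sum_nbij' (upd · a) (upd · a') (fun ω hω => ?_) (fun ω hω => ?_) (fun ω hω => ?_)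
      (fun ω hω => ?_) fun ω _ => (hν_upd ω a).symm
    all_goals obtain ⟨hU, hW⟩ := (mem_filter.mp hω).2
    · exact mem_filter.mpr ⟨mem_univ _, hU_upd ω a, (hW_upd ω a).trans hW⟩
    · exact mem_filter.mpr ⟨mem_univ _, hU_upd ω a', (hW_upd ω a').trans hW⟩
    · simp only [hupd_upd, ← hU, hupd_U]
    · simp only [hupd_upd, ← hU, hupd_U]
  have hW : pmfOf μ W w = ∑ ω ∈ fiber a, ν ω := by
    rw [← sum_pmfOf_pair_left μ U W w]
    simp only [hpair, hfiber, ← sum_mul, hκ, one_mul]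
  rw [hpair, hfiber, hW]

lemma entropy_pair_eq_add_of_kernel [Fintype α] [Fintype γ] {ι : Type*} (U : Ω → α)
    (W : Ω → γ) (κ : ι → α → ℝ) (g : γ → ι)
    (hker : ∀ a w, pmfOf μ (fun ω => (U ω, W ω)) (a, w) = κ (g w) a * pmfOf μ W w)
    (hκ : ∀ i, ∑ a, κ i a = 1) :
    entropy μ (fun ω => (U ω, W ω))
      = entropy μ W + ∑ ω, μ ω * ∑ a, negMulLog (κ (g (W ω)) a) := by
  rw [entropy_eq_sum_negMulLog_pmfOf, Fintype.sum_prod_type, sum_comm,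
    entropy_eq_sum_negMulLog_pmfOf, ← sum_pmfOf_mul μ W fun w => ∑ a, negMulLog (κ (g w) a),
    ← sum_add_distrib]
  refine sum_congr rfl fun w _ => ?_
  simp only [hker, negMulLog_mul, sum_add_distrib, ← mul_sum, ← sum_mul, hκ, one_mul]
  ring

lemma entropy_comp {Ω' : Type*} [Fintype Ω'] [DecidableEq Ω'] [Fintype α] (proj : Ω → Ω')
    {ν : Ω' → ℝ} (hν : ∀ v, pmfOf μ proj v = ν v) (Z : Ω' → α) :
    entropy μ (fun ω => Z (proj ω)) = entropy ν Z := by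
  simp only [entropy_eq_sum_negMulLog_pmfOf, pmfOf, ← hν]
  refine sum_congr rfl fun d _ => ?_
  rw [sum_fiberwise_eq_sum_filter]
  simp

end FiniteEntropy

section Supermodular

variable {ι : Type*} [DecidableEq ι]

lemma exists_greatest_of_union_mem (U : Finset ι) {P : Finset ι → Prop} (h0 : P ∅)
    (hunion : ∀ A ⊆ U, ∀ B ⊆ U, P A → P B → P (A ∪ B)) :
    ∃ D ⊆ U, P D ∧ ∀ E ⊆ U, P E → E ⊆ D := by
  classical
  set family := U.powerset.filter P
  have hclosed : SupClosed {A | A ⊆ U ∧ P A} := fun A hA B hB =>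
    ⟨union_subset hA.1 hB.1, hunion A hA.1 B hB.1 hA.2 hB.2⟩
  have hmem : family.sup id ∈ {A | A ⊆ U ∧ P A} :=
    hclosed.finsetSup_mem ⟨∅, by simp [family, h0]⟩ fun A hA => by
      simpa [family] using hA
  exact ⟨_, hmem.1, hmem.2, fun E hE hPE =>
    le_sup (f := id) (mem_filter.mpr ⟨mem_powerset.mpr hE, hPE⟩)⟩

variable {Φ : Finset ι → ℝ}

lemma lt_union_of_supermodular_of_subset
    (hΦ : ∀ A B, Φ A + Φ B ≤ Φ (A ∪ B) + Φ (A ∩ B)) {A B T : Finset ι}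
    (hB : ∀ T ⊂ B, Φ T < Φ B) (hAT : A ⊆ T) (hT : T ⊂ A ∪ B) : Φ T < Φ (A ∪ B) := by
  have hTB : T ∪ B = A ∪ B :=
    (union_subset hT.subset subset_union_right).antisymm (union_subset_union_left hAT)
  have hTB' : T ∩ B ⊂ B := by
    refine ssubset_of_subset_of_ne inter_subset_right fun h => hT.not_subset ?_
    exact union_subset hAT (h ▸ inter_subset_left)
  linarith [hTB ▸ hΦ T B, hB _ hTB']

lemma lt_union_of_supermodular (hΦ : ∀ A B, Φ A + Φ B ≤ Φ (A ∪ B) + Φ (A ∩ B))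
    {A B : Finset ι} (hA : ∀ T ⊂ A, Φ T < Φ A) (hB : ∀ T ⊂ B, Φ T < Φ B) :
    ∀ T ⊂ A ∪ B, Φ T < Φ (A ∪ B) := by
  intro T hT
  by_cases hAT : A ⊆ T
  · exact lt_union_of_supermodular_of_subset hΦ hB hAT hT
  have hTA : T ∩ A ⊂ A :=
    ssubset_of_subset_of_ne inter_subset_right fun h => hAT (h ▸ inter_subset_left)
  have hlt : Φ T < Φ (T ∪ A) := by linarith [hΦ T A, hA _ hTA]
  have hle : Φ (T ∪ A) ≤ Φ (A ∪ B) := by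
    rcases (union_subset hT.subset subset_union_left).eq_or_ssubset with h | h
    · rw [h]
    · exact (lt_union_of_supermodular_of_subset hΦ hB subset_union_right h).le
  exact hlt.trans_le hle

end Supermodular

section Coordinates

variable {n : ℕ} {QA X0A YdA : Type} {XA YA YhA : Fin n → Type}
  {S : Finset (Fin n)} {ω ω' : DFOmega QA X0A XA YA YdA YhA}

lemma rvXS_eq_iff :
    rvXS S ω = rvXS S ω' ↔ ∀ i ∈ S, ω.2.2.1 i = ω'.2.2.1 i :=
  ⟨fun h i hi => congrFun h ⟨i, hi⟩, fun h => funext fun i => h i i.2⟩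

lemma rvYS_eq_iff :
    rvYS S ω = rvYS S ω' ↔ ∀ i ∈ S, ω.2.2.2.1 i = ω'.2.2.2.1 i :=
  ⟨fun h i hi => congrFun h ⟨i, hi⟩, fun h => funext fun i => h i i.2⟩

lemma rvYhS_eq_iff :
    rvYhS S ω = rvYhS S ω' ↔ ∀ i ∈ S, ω.2.2.2.2.2 i = ω'.2.2.2.2.2 i :=
  ⟨fun h i hi => congrFun h ⟨i, hi⟩, fun h => funext fun i => h i i.2⟩

end Coordinates

section RelayEntropies

variable {n Mc : ℕ} {QA X0A YdA : Type} {XA YA YhA : Fin n → Type}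
  [Fintype QA] [DecidableEq QA] [Fintype X0A] [DecidableEq X0A]
  [Fintype YdA] [DecidableEq YdA]
  [∀ i, Fintype (XA i)] [∀ i, DecidableEq (XA i)]
  [∀ i, Fintype (YA i)] [∀ i, DecidableEq (YA i)]
  [∀ i, Fintype (YhA i)] [∀ i, DecidableEq (YhA i)]
  (ℳ : Finset (Fin n)) (σ : Fin Mc → Fin n) (k : Fin (Mc + 1))
  (μ : DFOmega QA X0A XA YA YdA YhA → ℝ)

noncomputable def obsEntropy (A B C : Finset (Fin n)) : ℝ :=
  entropy μ fun ω => (rvX0 ω, rvXS (A ∪ ℳ) ω, rvYS B ω, rvYhS C ω, rvYk σ k ω, rvQ ω)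

noncomputable def inputEntropy (A : Finset (Fin n)) : ℝ :=
  entropy μ fun ω => (rvX0 ω, rvXS (A ∪ ℳ) ω, rvQ ω)

noncomputable def potential (w : Fin n → ℝ) (T : Finset (Fin n)) : ℝ :=
  ∑ i ∈ T, w i - obsEntropy ℳ σ k μ T ∅ T

lemma condMI_inputs_eq (S R : Finset (Fin n)) :
    condMI μ (rvXS S) (fun ω => (rvYhS R ω, rvYk σ k ω))
        (fun ω => ((rvX0 ω, rvXS ℳ ω), rvXS R ω, rvQ ω))
      = inputEntropy ℳ μ (S ∪ R) + obsEntropy ℳ σ k μ R ∅ R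
        - obsEntropy ℳ σ k μ (S ∪ R) ∅ R - inputEntropy ℳ μ R := by
  rw [condMI]
  congr 1; congr 1; congr 1
  all_goals
    refine entropy_congr fun ω ω' => ?_
    simp only [Prod.ext_iff, rvXS_eq_iff, rvYS_eq_iff, rvYhS_eq_iff, forall_mem_union,
      notMem_empty, IsEmpty.forall_iff, implies_true]
    tauto

lemma condMI_outputs_eq (S R : Finset (Fin n)) :
    condMI μ (rvYS S) (rvYhS S)
        (fun ω => ((rvX0 ω, rvXS ℳ ω), rvXS (S ∪ R) ω, rvYk σ k ω, rvYhS R ω, rvQ ω))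
      = obsEntropy ℳ σ k μ (S ∪ R) S R + obsEntropy ℳ σ k μ (S ∪ R) ∅ (S ∪ R)
        - obsEntropy ℳ σ k μ (S ∪ R) S (S ∪ R) - obsEntropy ℳ σ k μ (S ∪ R) ∅ R := by
  rw [condMI]
  congr 1; congr 1; congr 1
  all_goals
    refine entropy_congr fun ω ω' => ?_
    simp only [Prod.ext_iff, rvXS_eq_iff, rvYS_eq_iff, rvYhS_eq_iff, forall_mem_union,
      notMem_empty, IsEmpty.forall_iff, implies_true]
    tauto

set_option synthInstance.maxSize 4096 in
lemma condMI_obs_eq (P Q R : Finset (Fin n)) :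
    condMI μ (fun ω => (rvXS P ω, rvYhS P ω)) (fun ω => (rvXS Q ω, rvYhS Q ω))
        (fun ω => (rvX0 ω, rvXS (R ∪ ℳ) ω, rvYS ∅ ω, rvYhS R ω, rvYk σ k ω, rvQ ω))
      = obsEntropy ℳ σ k μ (P ∪ R) ∅ (P ∪ R) + obsEntropy ℳ σ k μ (Q ∪ R) ∅ (Q ∪ R)
        - obsEntropy ℳ σ k μ (P ∪ Q ∪ R) ∅ (P ∪ Q ∪ R) - obsEntropy ℳ σ k μ R ∅ R := by
  rw [condMI]
  congr 1; congr 1; congr 1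
  all_goals
    refine entropy_congr fun ω ω' => ?_
    simp only [Prod.ext_iff, rvXS_eq_iff, rvYS_eq_iff, rvYhS_eq_iff, forall_mem_union,
      notMem_empty, IsEmpty.forall_iff, implies_true]
    tauto

lemma obsEntropy_submodular (hμ : ∀ ω, 0 ≤ μ ω) (A B : Finset (Fin n)) :
    obsEntropy ℳ σ k μ (A ∪ B) ∅ (A ∪ B) + obsEntropy ℳ σ k μ (A ∩ B) ∅ (A ∩ B)
      ≤ obsEntropy ℳ σ k μ A ∅ A + obsEntropy ℳ σ k μ B ∅ B := by
  have h := condMI_nonneg hμ (fun ω => (rvXS (A \ B) ω, rvYhS (A \ B) ω))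
    (fun ω => (rvXS (B \ A) ω, rvYhS (B \ A) ω))
    (fun ω => (rvX0 ω, rvXS (A ∩ B ∪ ℳ) ω, rvYS ∅ ω, rvYhS (A ∩ B) ω, rvYk σ k ω, rvQ ω))
  have hA : A \ B ∪ A ∩ B = A := sdiff_union_inter A B
  have hB : B \ A ∪ A ∩ B = B := by rw [inter_comm, sdiff_union_inter]
  have hAB : A \ B ∪ B \ A ∪ A ∩ B = A ∪ B := by
    ext; simp only [mem_union, mem_sdiff, mem_inter]; tauto
  rw [condMI_obs_eq, hA, hB, hAB] at h
  linarith

lemma potential_supermodular (hμ : ∀ ω, 0 ≤ μ ω) (w : Fin n → ℝ) (A B : Finset (Fin n)) :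
    potential ℳ σ k μ w A + potential ℳ σ k μ w B
      ≤ potential ℳ σ k μ w (A ∪ B) + potential ℳ σ k μ w (A ∩ B) := by
  have := obsEntropy_submodular ℳ σ k μ hμ A B
  simp only [potential]
  linarith [sum_union_inter (s₁ := A) (s₂ := B) (f := w)]

end RelayEntropies

section Factorization

variable {n : ℕ} {QA X0A YdA : Type} {XA YA YhA : Fin n → Type}
  {ℳ : Finset (Fin n)} {pQ : QA → ℝ} {p0 : QA → X0A → ℝ}
  {pM : QA → X0A → (∀ i : ℳ, XA i) → ℝ} {pC : ∀ i : Fin n, QA → XA i → ℝ}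
  {W : X0A → (∀ i, XA i) → ((∀ i, YA i) × YdA) → ℝ}
  {κ : ∀ i : Fin n, QA → YA i → XA i → YhA i → ℝ}

lemma muDF_nonneg (hpQ : ∀ q, 0 ≤ pQ q) (hp0 : ∀ q x, 0 ≤ p0 q x)
    (hpM : ∀ q x0 xm, 0 ≤ pM q x0 xm) (hpC : ∀ i q x, 0 ≤ pC i q x)
    (hW : ∀ x0 x y, 0 ≤ W x0 x y) (hκ : ∀ i q y x yh, 0 ≤ κ i q y x yh)
    (ω : DFOmega QA X0A XA YA YdA YhA) : 0 ≤ muDF ℳ pQ p0 pM pC W κ ω := by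
  unfold muDF
  have := prod_nonneg fun j (_ : j ∈ ℳᶜ) => hpC j ω.1 (ω.2.2.1 j)
  have := prod_nonneg fun j (_ : j ∈ univ) => hκ j ω.1 (ω.2.2.2.1 j) (ω.2.2.1 j) (ω.2.2.2.2.2 j)
  have := hpM ω.1 ω.2.1 (fun i => ω.2.2.1 i)
  have := hW ω.2.1 ω.2.2.1 (ω.2.2.2.1, ω.2.2.2.2.1)
  have := hpQ ω.1
  have := hp0 ω.1 ω.2.1
  positivity

def updateYh (i : Fin n) (ω : DFOmega QA X0A XA YA YdA YhA) (a : YhA i) :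
    DFOmega QA X0A XA YA YdA YhA :=
  (ω.1, ω.2.1, ω.2.2.1, ω.2.2.2.1, ω.2.2.2.2.1, Function.update ω.2.2.2.2.2 i a)

def updateX (i : Fin n) (v : QA × X0A × (∀ i, XA i)) (a : XA i) : QA × X0A × (∀ i, XA i) :=
  (v.1, v.2.1, Function.update v.2.2 i a)

def projX (ω : DFOmega QA X0A XA YA YdA YhA) : QA × X0A × (∀ i, XA i) :=
  (ω.1, ω.2.1, ω.2.2.1)

noncomputable def muX (ℳ : Finset (Fin n)) (pQ : QA → ℝ) (p0 : QA → X0A → ℝ)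
    (pM : QA → X0A → (∀ i : ℳ, XA i) → ℝ) (pC : ∀ i : Fin n, QA → XA i → ℝ)
    (v : QA × X0A × (∀ i, XA i)) : ℝ :=
  pQ v.1 * p0 v.1 v.2.1 * pM v.1 v.2.1 (fun j => v.2.2 j) * ∏ j ∈ ℳᶜ, pC j v.1 (v.2.2 j)

variable [Fintype QA] [Fintype X0A] [Fintype YdA]
  [∀ i, Fintype (XA i)] [∀ i, Fintype (YA i)] [∀ i, Fintype (YhA i)]

noncomputable def compressionEntropy (μ : DFOmega QA X0A XA YA YdA YhA → ℝ)
    (κ : ∀ i : Fin n, QA → YA i → XA i → YhA i → ℝ) (i : Fin n) : ℝ :=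
  ∑ ω, μ ω * ∑ a, negMulLog (κ i ω.1 (ω.2.2.2.1 i) (ω.2.2.1 i) a)

lemma entropy_compression_pair [∀ i, DecidableEq (YhA i)]
    (hκs : ∀ i q y x, ∑ yh, κ i q y x yh = 1) (i : Fin n)
    {γ : Type*} [Fintype γ] [DecidableEq γ] (V : DFOmega QA X0A XA YA YdA YhA → γ)
    (g : γ → QA × YA i × XA i) (hg : ∀ ω, g (V ω) = (ω.1, ω.2.2.2.1 i, ω.2.2.1 i))
    (hV : ∀ ω a, V (updateYh i ω a) = V ω) :
    entropy (muDF ℳ pQ p0 pM pC W κ) (fun ω => (ω.2.2.2.2.2 i, V ω))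
      = entropy (muDF ℳ pQ p0 pM pC W κ) V
        + compressionEntropy (muDF ℳ pQ p0 pM pC W κ) κ i := by
  set κi : QA × YA i × XA i → YhA i → ℝ := fun t => κ i t.1 t.2.1 t.2.2
  have hκi : ∀ t, ∑ a, κi t a = 1 := fun t => hκs i t.1 t.2.1 t.2.2
  set ν : DFOmega QA X0A XA YA YdA YhA → ℝ := fun ω =>
    pQ ω.1 * p0 ω.1 ω.2.1 * pM ω.1 ω.2.1 (fun j => ω.2.2.1 j)
      * (∏ j ∈ ℳᶜ, pC j ω.1 (ω.2.2.1 j)) * W ω.2.1 ω.2.2.1 (ω.2.2.2.1, ω.2.2.2.2.1)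
      * ∏ j ∈ univ.erase i, κ j ω.1 (ω.2.2.2.1 j) (ω.2.2.1 j) (ω.2.2.2.2.2 j)
  have hν : ∀ ω a, ν (updateYh i ω a) = ν ω := fun ω a => by
    simp only [ν, updateYh]
    congr 1
    exact prod_congr rfl fun j hj => by rw [Function.update_of_ne (mem_erase.mp hj).1]
  have hμ : ∀ ω, muDF ℳ pQ p0 pM pC W κ ω = ν ω * κi (g (V ω)) (ω.2.2.2.2.2 i) := fun ω => by
    simp only [muDF, ν, κi, hg, ← prod_erase_mul univ _ (mem_univ i)]
    ring
  have hker := pmfOf_pair_eq_kernel_mul ν (fun ω => ω.2.2.2.2.2 i) V κi g (updateYh i)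
    (fun ω a => Function.update_self i a _) (fun ω => by simp [updateYh])
    (fun ω a a' => by simp [updateYh]) hV hν hμ hκi
  rw [entropy_pair_eq_add_of_kernel _ V κi g hker hκi]
  simp only [hg, κi, compressionEntropy]

lemma pmfOf_projX_muDF [DecidableEq QA] [DecidableEq X0A] [∀ i, DecidableEq (XA i)]
    (hWs : ∀ x0 x, ∑ y, W x0 x y = 1) (hκs : ∀ i q y x, ∑ yh, κ i q y x yh = 1)
    (v : QA × X0A × (∀ i, XA i)) :
    pmfOf (muDF ℳ pQ p0 pM pC W κ) projX v = muX ℳ pQ p0 pM pC v := by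
  have hfiber : pmfOf (muDF ℳ pQ p0 pM pC W κ) projX v
      = ∑ r : (∀ i, YA i) × YdA × (∀ i, YhA i),
          muDF ℳ pQ p0 pM pC W κ (v.1, v.2.1, v.2.2, r.1, r.2.1, r.2.2) := by
    refine sum_nbij' (fun ω => (ω.2.2.2.1, ω.2.2.2.2.1, ω.2.2.2.2.2))
      (fun r => (v.1, v.2.1, v.2.2, r.1, r.2.1, r.2.2)) (by simp)
      (fun r _ => mem_filter.mpr ⟨mem_univ _, rfl⟩) (fun ω hω => ?_) (by simp) (fun ω hω => ?_)
    all_goals obtain rfl : projX ω = v := (mem_filter.mp hω).2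
    all_goals rfl
  have hκprod : ∀ y : ∀ i, YA i, ∑ yh : ∀ i, YhA i, ∏ j, κ j v.1 (y j) (v.2.2 j) (yh j) = 1 :=
    fun y => by rw [← Fintype.piFinset_univ, ← prod_univ_sum]; simp [hκs]
  have hfactor : ∀ r : (∀ i, YA i) × YdA × (∀ i, YhA i),
      muDF ℳ pQ p0 pM pC W κ (v.1, v.2.1, v.2.2, r.1, r.2.1, r.2.2)
        = muX ℳ pQ p0 pM pC v
          * (W v.2.1 v.2.2 (r.1, r.2.1) * ∏ j, κ j v.1 (r.1 j) (v.2.2 j) (r.2.2 j)) :=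
    fun r => by simp only [muDF, muX]; ring
  rw [hfiber, sum_congr rfl fun r _ => hfactor r, ← mul_sum, Fintype.sum_prod_type]
  simp only [Fintype.sum_prod_type, ← mul_sum, hκprod, mul_one]
  rw [← Fintype.sum_prod_type', hWs, mul_one]

noncomputable def inputKernelEntropy (ℳ : Finset (Fin n)) (pQ : QA → ℝ) (p0 : QA → X0A → ℝ)
    (pM : QA → X0A → (∀ i : ℳ, XA i) → ℝ) (pC : ∀ i : Fin n, QA → XA i → ℝ) (i : Fin n) : ℝ :=
  ∑ v, muX ℳ pQ p0 pM pC v * ∑ x, negMulLog (pC i v.1 x)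

lemma entropy_input_pair [∀ i, DecidableEq (XA i)] (hpCs : ∀ i q, ∑ x, pC i q x = 1)
    {i : Fin n} (hiM : i ∉ ℳ) {γ : Type*} [Fintype γ] [DecidableEq γ]
    (V : QA × X0A × (∀ i, XA i) → γ) (g : γ → QA)
    (hg : ∀ v, g (V v) = v.1) (hV : ∀ v a, V (updateX i v a) = V v) :
    entropy (muX ℳ pQ p0 pM pC) (fun v => (v.2.2 i, V v))
      = entropy (muX ℳ pQ p0 pM pC) V + inputKernelEntropy ℳ pQ p0 pM pC i := by
  set ν : QA × X0A × (∀ i, XA i) → ℝ := fun v =>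
    pQ v.1 * p0 v.1 v.2.1 * pM v.1 v.2.1 (fun j => v.2.2 j)
      * ∏ j ∈ ℳᶜ.erase i, pC j v.1 (v.2.2 j)
  have hν : ∀ v a, ν (updateX i v a) = ν v := fun v a => by
    have hM : (fun j : ℳ => Function.update v.2.2 i a j) = fun j : ℳ => v.2.2 j :=
      funext fun j => Function.update_of_ne (fun h : (j : Fin n) = i => hiM (h ▸ j.2)) a v.2.2
    simp only [ν, updateX, hM]
    congr 1
    exact prod_congr rfl fun j hj => by rw [Function.update_of_ne (mem_erase.mp hj).1]
  have hμ : ∀ v, muX ℳ pQ p0 pM pC v = ν v * pC i (g (V v)) (v.2.2 i) := fun v => by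
    simp only [muX, ν, hg, ← prod_erase_mul ℳᶜ _ (mem_compl.mpr hiM)]
    ring
  have hker := pmfOf_pair_eq_kernel_mul ν (fun v => v.2.2 i) V (pC i) g (updateX i)
    (fun v a => Function.update_self i a _) (fun v => by simp [updateX])
    (fun v a a' => by simp [updateX]) hV hν hμ (hpCs i)
  rw [entropy_pair_eq_add_of_kernel _ V (pC i) g hker (hpCs i)]
  simp only [hg, inputKernelEntropy]

lemma inputEntropy_insert [DecidableEq QA] [DecidableEq X0A] [∀ i, DecidableEq (XA i)]
    (hWs : ∀ x0 x, ∑ y, W x0 x y = 1)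
    (hκs : ∀ i q y x, ∑ yh, κ i q y x yh = 1) (hpCs : ∀ i q, ∑ x, pC i q x = 1)
    {A : Finset (Fin n)} {i : Fin n} (hiM : i ∉ ℳ) (hiA : i ∉ A) :
    inputEntropy ℳ (muDF ℳ pQ p0 pM pC W κ) (insert i A)
      = inputEntropy ℳ (muDF ℳ pQ p0 pM pC W κ) A + inputKernelEntropy ℳ pQ p0 pM pC i := by
  have hpush : ∀ B, inputEntropy ℳ (muDF ℳ pQ p0 pM pC W κ) B
      = entropy (muX ℳ pQ p0 pM pC) fun v => (v.2.1, fun j : ↥(B ∪ ℳ) => v.2.2 j, v.1) :=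
    fun B => entropy_comp projX (pmfOf_projX_muDF hWs hκs)
      fun v => (v.2.1, fun j : ↥(B ∪ ℳ) => v.2.2 j, v.1)
  have hiAM : i ∉ A ∪ ℳ := by simp [hiA, hiM]
  rw [hpush, hpush, ← entropy_input_pair hpCs hiM _ (fun w => w.2.2) (fun v => rfl)]
  · refine entropy_congr fun v v' => ?_
    simp only [Prod.ext_iff, funext_iff, Subtype.forall, insert_union, forall_mem_insert]
    tauto
  · intro v a
    simp only [updateX, Prod.mk.injEq, true_and, and_true]
    exact funext fun j => Function.update_of_ne (fun h : (j : Fin n) = i => hiAM (h ▸ j.2)) _ _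

lemma inputEntropy_union_eq_add_sum [DecidableEq QA] [DecidableEq X0A]
    [∀ i, DecidableEq (XA i)] (hWs : ∀ x0 x, ∑ y, W x0 x y = 1)
    (hκs : ∀ i q y x, ∑ yh, κ i q y x yh = 1) (hpCs : ∀ i q, ∑ x, pC i q x = 1)
    {A T : Finset (Fin n)} (hT : T ⊆ ℳᶜ) (hAT : Disjoint A T) :
    inputEntropy ℳ (muDF ℳ pQ p0 pM pC W κ) (A ∪ T)
      = inputEntropy ℳ (muDF ℳ pQ p0 pM pC W κ) A
        + ∑ i ∈ T, inputKernelEntropy ℳ pQ p0 pM pC i := by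
  induction T using Finset.induction_on with
  | empty => simp
  | @insert i T hiT ih =>
    have hiM : i ∉ ℳ := mem_compl.mp (hT (mem_insert_self i T))
    have hiA : i ∉ A ∪ T := by
      simp [hiT, disjoint_insert_right.mp hAT |>.1]
    rw [union_insert, inputEntropy_insert hWs hκs hpCs hiM hiA,
      ih ((subset_insert i T).trans hT) (disjoint_insert_right.mp hAT).2, sum_insert hiT]
    ring

noncomputable def relayWeight (ℳ : Finset (Fin n)) (pQ : QA → ℝ) (p0 : QA → X0A → ℝ)
    (pM : QA → X0A → (∀ i : ℳ, XA i) → ℝ) (pC : ∀ i : Fin n, QA → XA i → ℝ)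
    (W : X0A → (∀ i, XA i) → ((∀ i, YA i) × YdA) → ℝ)
    (κ : ∀ i : Fin n, QA → YA i → XA i → YhA i → ℝ) (i : Fin n) : ℝ :=
  inputKernelEntropy ℳ pQ p0 pM pC i + compressionEntropy (muDF ℳ pQ p0 pM pC W κ) κ i

end Factorization

section SelfDecodability

variable {n Mc : ℕ} {QA X0A YdA : Type} {XA YA YhA : Fin n → Type}
  [Fintype QA] [DecidableEq QA] [Fintype X0A] [DecidableEq X0A]
  [Fintype YdA] [DecidableEq YdA]
  [∀ i, Fintype (XA i)] [∀ i, DecidableEq (XA i)]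
  [∀ i, Fintype (YA i)] [∀ i, DecidableEq (YA i)]
  [∀ i, Fintype (YhA i)] [∀ i, DecidableEq (YhA i)]
  {ℳ : Finset (Fin n)} {σ : Fin Mc → Fin n} {k : Fin (Mc + 1)}
  {pQ : QA → ℝ} {p0 : QA → X0A → ℝ}
  {pM : QA → X0A → (∀ i : ℳ, XA i) → ℝ} {pC : ∀ i : Fin n, QA → XA i → ℝ}
  {W : X0A → (∀ i, XA i) → ((∀ i, YA i) × YdA) → ℝ}
  {κ : ∀ i : Fin n, QA → YA i → XA i → YhA i → ℝ}

lemma obsEntropy_insert (hκs : ∀ i q y x, ∑ yh, κ i q y x yh = 1)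
    {A B C : Finset (Fin n)} {i : Fin n} (hiA : i ∈ A) (hiB : i ∈ B) (hiC : i ∉ C) :
    obsEntropy ℳ σ k (muDF ℳ pQ p0 pM pC W κ) A B (insert i C)
      = obsEntropy ℳ σ k (muDF ℳ pQ p0 pM pC W κ) A B C
        + compressionEntropy (muDF ℳ pQ p0 pM pC W κ) κ i := by
  rw [obsEntropy, obsEntropy, ← entropy_compression_pair hκs i _
    (fun w => (w.2.2.2.2.2, w.2.2.1 ⟨i, hiB⟩, w.2.1 ⟨i, mem_union_left ℳ hiA⟩)) (fun ω => rfl)]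
  · refine entropy_congr fun ω ω' => ?_
    simp only [Prod.ext_iff, rvXS_eq_iff, rvYS_eq_iff, rvYhS_eq_iff, forall_mem_insert]
    tauto
  · intro ω a
    have hC : rvYhS C (updateYh i ω a) = rvYhS C ω :=
      funext fun j => Function.update_of_ne (fun h : (j : Fin n) = i => hiC (h ▸ j.2)) _ _
    simp only [hC]
    rfl

lemma obsEntropy_union_eq_add_sum (hκs : ∀ i q y x, ∑ yh, κ i q y x yh = 1)
    {A B C T : Finset (Fin n)} (hTA : T ⊆ A) (hTB : T ⊆ B) (hCT : Disjoint C T) :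
    obsEntropy ℳ σ k (muDF ℳ pQ p0 pM pC W κ) A B (C ∪ T)
      = obsEntropy ℳ σ k (muDF ℳ pQ p0 pM pC W κ) A B C
        + ∑ i ∈ T, compressionEntropy (muDF ℳ pQ p0 pM pC W κ) κ i := by
  induction T using Finset.induction_on with
  | empty => simp
  | @insert i T hiT ih =>
    have hiC : i ∉ C ∪ T := by
      simp [hiT, disjoint_insert_right.mp hCT |>.1]
    rw [union_insert,
      obsEntropy_insert hκs (hTA (mem_insert_self i T)) (hTB (mem_insert_self i T)) hiC,
      ih ((subset_insert i T).trans hTA) ((subset_insert i T).trans hTB)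
        (disjoint_insert_right.mp hCT).2, sum_insert hiT]
    ring

lemma margin_eq_potential_sub (hWs : ∀ x0 x, ∑ y, W x0 x y = 1)
    (hκs : ∀ i q y x, ∑ yh, κ i q y x yh = 1) (hpCs : ∀ i q, ∑ x, pC i q x = 1)
    {D S : Finset (Fin n)} (hD : D ⊆ ℳᶜ) (hS : S ⊆ D) :
    condMI (muDF ℳ pQ p0 pM pC W κ) (rvXS S) (fun ω => (rvYhS (D \ S) ω, rvYk σ k ω))
        (fun ω => ((rvX0 ω, rvXS ℳ ω), rvXS (D \ S) ω, rvQ ω))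
      - condMI (muDF ℳ pQ p0 pM pC W κ) (rvYS S) (rvYhS S)
        (fun ω => ((rvX0 ω, rvXS ℳ ω), rvXS D ω, rvYk σ k ω, rvYhS (D \ S) ω, rvQ ω))
      = potential ℳ σ k (muDF ℳ pQ p0 pM pC W κ) (relayWeight ℳ pQ p0 pM pC W κ) D
        - potential ℳ σ k (muDF ℳ pQ p0 pM pC W κ) (relayWeight ℳ pQ p0 pM pC W κ) (D \ S) := by
  have hinputs := condMI_inputs_eq ℳ σ k (muDF ℳ pQ p0 pM pC W κ) S (D \ S)
  have houtputs := condMI_outputs_eq ℳ σ k (muDF ℳ pQ p0 pM pC W κ) S (D \ S)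
  have hX := inputEntropy_union_eq_add_sum (pQ := pQ) (p0 := p0) (pM := pM) hWs hκs hpCs
    (hS.trans hD) (disjoint_sdiff_self_left (y := D) (x := S))
  have hYh := obsEntropy_union_eq_add_sum (σ := σ) (k := k) (pQ := pQ) (p0 := p0) (pM := pM)
    (pC := pC) (W := W) hκs (B := S) hS subset_rfl
    (disjoint_sdiff_self_left (y := D) (x := S))
  rw [union_sdiff_of_subset hS] at hinputs houtputs
  rw [sdiff_union_of_subset hS] at hX hYh
  rw [hinputs, houtputs]
  simp only [potential, relayWeight, sum_add_distrib]
  linarith [sum_sdiff hS (f := inputKernelEntropy ℳ pQ p0 pM pC),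
    sum_sdiff hS (f := compressionEntropy (muDF ℳ pQ p0 pM pC W κ) κ)]

lemma selfDecodable_iff (hWs : ∀ x0 x, ∑ y, W x0 x y = 1)
    (hκs : ∀ i q y x, ∑ yh, κ i q y x yh = 1) (hpCs : ∀ i q, ∑ x, pC i q x = 1)
    {D : Finset (Fin n)} (hD : D ⊆ ℳᶜ) :
    SelfDecodable ℳ σ (muDF ℳ pQ p0 pM pC W κ) k D ↔ ∀ T ⊂ D,
      potential ℳ σ k (muDF ℳ pQ p0 pM pC W κ) (relayWeight ℳ pQ p0 pM pC W κ) T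
        < potential ℳ σ k (muDF ℳ pQ p0 pM pC W κ) (relayWeight ℳ pQ p0 pM pC W κ) D := by
  constructor
  · intro h T hT
    have := h (D \ T) sdiff_subset (sdiff_nonempty.mpr hT.not_subset)
    rwa [margin_eq_potential_sub hWs hκs hpCs hD sdiff_subset,
      Finset.sdiff_sdiff_eq_self hT.subset, sub_pos] at this
  · intro h S hS hne
    rw [margin_eq_potential_sub hWs hκs hpCs hD hS, sub_pos]
    exact h _ (sdiff_ssubset hS hne)

end SelfDecodability

theorem exists_largest_selfDecodable_general
    {n Mc : ℕ} {QA X0A YdA : Type} {XA YA YhA : Fin n → Type}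
    [Fintype QA] [DecidableEq QA] [Fintype X0A] [DecidableEq X0A]
    [Fintype YdA] [DecidableEq YdA]
    [∀ i, Fintype (XA i)] [∀ i, DecidableEq (XA i)]
    [∀ i, Fintype (YA i)] [∀ i, DecidableEq (YA i)]
    [∀ i, Fintype (YhA i)] [∀ i, DecidableEq (YhA i)]
    (ℳ : Finset (Fin n))
    (σ : Fin Mc → Fin n)
    (pQ : QA → ℝ) (p0 : QA → X0A → ℝ)
    (pM : QA → X0A → (∀ i : ℳ, XA i) → ℝ) (pC : ∀ i : Fin n, QA → XA i → ℝ)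
    (W : X0A → (∀ i, XA i) → ((∀ i, YA i) × YdA) → ℝ)
    (κ : ∀ i : Fin n, QA → YA i → XA i → YhA i → ℝ)
    (hpQ : ∀ q, 0 ≤ pQ q)
    (hp0 : ∀ q x, 0 ≤ p0 q x)
    (hpM : ∀ q x0 xm, 0 ≤ pM q x0 xm)
    (hpC : ∀ i q x, 0 ≤ pC i q x) (hpCs : ∀ i q, ∑ x, pC i q x = 1)
    (hW : ∀ x0 x y, 0 ≤ W x0 x y) (hWs : ∀ x0 x, ∑ y, W x0 x y = 1)
    (hκ : ∀ i q y x yh, 0 ≤ κ i q y x yh) (hκs : ∀ i q y x, ∑ yh, κ i q y x yh = 1)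
    (k : Fin (Mc + 1)) :
    ∃ Dk : Finset (Fin n), Dk ⊆ ℳᶜ ∧
      SelfDecodable ℳ σ (muDF ℳ pQ p0 pM pC W κ) k Dk ∧
      ∀ E ⊆ ℳᶜ, SelfDecodable ℳ σ (muDF ℳ pQ p0 pM pC W κ) k E → E ⊆ Dk := by
  have hμ := muDF_nonneg hpQ hp0 hpM hpC hW hκ
  refine exists_greatest_of_union_mem ℳᶜ
    (fun S hS hne => absurd (subset_empty.mp hS) hne.ne_empty) fun A hA B hB hsdA hsdB => ?_
  rw [selfDecodable_iff hWs hκs hpCs hA] at hsdA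
  rw [selfDecodable_iff hWs hκs hpCs hB] at hsdB
  rw [selfDecodable_iff hWs hκs hpCs (union_subset hA hB)]
  exact lt_union_of_supermodular (potential_supermodular ℳ σ k _ hμ _) hsdA hsdB

/-- For each `k ∈ {2,…,M+2}` (encoded as `k : Fin (Mc+1)`), among
all subsets of `N∖M` that are self-decodable at node `π(k)` there is a unique largest
one: there exists `D_k ⊆ N∖M` self-decodable at node `π(k)` containing every subset
of `N∖M` that is self-decodable at node `π(k)`. -/
theorem exists_largest_selfDecodable
    {n Mc : ℕ} {QA X0A YdA : Type} {XA YA YhA : Fin n → Type}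
    [Fintype QA] [DecidableEq QA] [Fintype X0A] [DecidableEq X0A]
    [Fintype YdA] [DecidableEq YdA]
    [∀ i, Fintype (XA i)] [∀ i, DecidableEq (XA i)]
    [∀ i, Fintype (YA i)] [∀ i, DecidableEq (YA i)]
    [∀ i, Fintype (YhA i)] [∀ i, DecidableEq (YhA i)]
    (ℳ : Finset (Fin n)) (hMcard : ℳ.card = Mc)
    (σ : Fin Mc → Fin n) (hσinj : Function.Injective σ)
    (hσmem : ∀ j, σ j ∈ ℳ) (hσsurj : ∀ i ∈ ℳ, ∃ j, σ j = i)
    (pQ : QA → ℝ) (p0 : QA → X0A → ℝ)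
    (pM : QA → X0A → (∀ i : ℳ, XA i) → ℝ) (pC : ∀ i : Fin n, QA → XA i → ℝ)
    (W : X0A → (∀ i, XA i) → ((∀ i, YA i) × YdA) → ℝ)
    (κ : ∀ i : Fin n, QA → YA i → XA i → YhA i → ℝ)
    (hpQ : ∀ q, 0 ≤ pQ q) (hpQs : ∑ q, pQ q = 1)
    (hp0 : ∀ q x, 0 ≤ p0 q x) (hp0s : ∀ q, ∑ x, p0 q x = 1)
    (hpM : ∀ q x0 xm, 0 ≤ pM q x0 xm) (hpMs : ∀ q x0, ∑ xm, pM q x0 xm = 1)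
    (hpC : ∀ i q x, 0 ≤ pC i q x) (hpCs : ∀ i q, ∑ x, pC i q x = 1)
    (hW : ∀ x0 x y, 0 ≤ W x0 x y) (hWs : ∀ x0 x, ∑ y, W x0 x y = 1)
    (hκ : ∀ i q y x yh, 0 ≤ κ i q y x yh) (hκs : ∀ i q y x, ∑ yh, κ i q y x yh = 1)
    (k : Fin (Mc + 1)) :
    ∃ Dk : Finset (Fin n), Dk ⊆ ℳᶜ ∧
      SelfDecodable ℳ σ (muDF ℳ pQ p0 pM pC W κ) k Dk ∧
      ∀ E ⊆ ℳᶜ, SelfDecodable ℳ σ (muDF ℳ pQ p0 pM pC W κ) k E → E ⊆ Dk :=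
  exists_largest_selfDecodable_general ℳ σ pQ p0 pM pC W κ hpQ hp0 hpM hpC hpCs hW hWs hκ hκs k
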